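/- arXiv:2412.10889 — 3 statements merged into one kernel-verified Lean document; each statement's English description precedes it below -/
import Mathlib

section
/- Let $\xi_1,\dots,\xi_n$ be independent $\{0,1\}$-valued random variables with means $\lambda_i \in [0,1]$. There is an absolute constant $C$ such that for every integer $k$, $\mathbb{P}\left(\sum_{i=1}^n \xi_i = k\right) \leq C\left(\sum_{i=1}^n \lambda_i(1-\lambda_i)\right)^{-1/2}$, provided $\sum_i \lambda_i(1-\lambda_i) > 0$. -/
/-!
Fourier inversion on `ℤ`: for an integer-valued `S`,
`2π ℙ(S = k) = ∫_{-π}^{π} 𝔼[exp(it(S - k))] dt`. By independence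
`𝔼[exp(itS)] = ∏ᵢ (1 + λᵢ(e^{it} - 1))`, and
`|1 + λ(e^{it} - 1)|² = 1 - 2λ(1 - λ)(1 - cos t) ≤ exp(-2λ(1 - λ)(1 - cos t))`, so the
characteristic function is bounded by `exp(-V(1 - cos t))` with `V = ∑ᵢ λᵢ(1 - λᵢ)`.
Jordan's inequality `1 - cos t ≥ 2t²/π²` on `[-π, π]` and the Gaussian integral give
`ℙ(S = k) ≤ √(π/2) / (2√V) ≤ 1/√V`, so `C = 1` works.
-/

open MeasureTheory ProbabilityTheory Real Complex

theorem integral_exp_int_mul_mul_I (m : ℤ) :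
    ∫ t in (-π)..π, Complex.exp (m * t * I) = if m = 0 then ((2 * π : ℝ) : ℂ) else 0 := by
  split_ifs with hm
  · simp only [hm, Int.cast_zero, zero_mul, Complex.exp_zero, intervalIntegral.integral_const,
      real_smul, mul_one]
    push_cast; ring
  have hc : (m * I : ℂ) ≠ 0 := mul_ne_zero (Int.cast_ne_zero.2 hm) I_ne_zero
  have hperiod : Complex.exp (m * I * π) = Complex.exp (m * I * (-π : ℝ)) := by
    rw [← mul_one (Complex.exp (m * I * (-π : ℝ))), ← Complex.exp_int_mul_two_pi_mul_I m,
      ← Complex.exp_add]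
    push_cast; ring_nf
  simp_rw [mul_right_comm _ _ I]
  rw [integral_exp_mul_complex hc, hperiod, sub_self, zero_div]

theorem integral_charFun_mul_exp_eq_two_pi_mul_measureReal {μ : Measure ℝ} [IsFiniteMeasure μ]
    (hμ : ∀ᵐ x ∂μ, x ∈ Set.range ((↑) : ℤ → ℝ)) (k : ℤ) :
    ∫ t in (-π)..π, charFun μ t * Complex.exp (-(k * t * I)) = 2 * π * μ.real {(k : ℝ)} := by
  set f : ℝ → ℝ → ℂ := fun t x => Complex.exp (((x - k) * t : ℝ) * I)
  have hf : Integrable (Function.uncurry f) ((volume.restrict (Set.Ioc (-π) π)).prod μ) :=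
    .of_bound (by fun_prop) 1 (.of_forall fun p => (norm_exp_ofReal_mul_I _).le)
  have hcharFun (t : ℝ) : charFun μ t * Complex.exp (-(k * t * I)) = ∫ x, f t x ∂μ := by
    rw [charFun_apply_real, ← integral_mul_const]
    refine integral_congr_ae (.of_forall fun x => ?_)
    simp only [f, ← Complex.exp_add]
    push_cast; ring_nf
  have horth : ∀ᵐ x ∂μ, ∫ t in Set.Ioc (-π) π, f t x
      = Set.indicator {(k : ℝ)} (fun _ => ((2 * π : ℝ) : ℂ)) x := by
    filter_upwards [hμ] with x ⟨m, hm⟩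
    subst hm
    have := integral_exp_int_mul_mul_I (m - k)
    rw [intervalIntegral.integral_of_le (by linarith [pi_pos])] at this
    simp only [f]
    push_cast at this ⊢
    rw [this]
    by_cases h : m = k <;> simp [h, sub_eq_zero]
  simp_rw [hcharFun]
  rw [intervalIntegral.integral_of_le (by linarith [pi_pos]), integral_integral_swap hf,
    integral_congr_ae horth, integral_indicator_const _ (measurableSet_singleton _),
    Complex.real_smul]
  push_cast; ring

theorem integral_exp_neg_mul_one_sub_cos_le {V : ℝ} (hV : 0 < V) :
    ∫ t in (-π)..π, Real.exp (-V * (1 - Real.cos t)) ≤ 2 * π / √V := by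
  have hb : 0 < 2 * V / π ^ 2 := by positivity
  calc ∫ t in (-π)..π, Real.exp (-V * (1 - Real.cos t))
      ≤ ∫ t in (-π)..π, Real.exp (-(2 * V / π ^ 2) * t ^ 2) := by
        refine intervalIntegral.integral_mono_on (by linarith [pi_pos])
          (Continuous.intervalIntegrable (by fun_prop) _ _)
          (Continuous.intervalIntegrable (by fun_prop) _ _) fun t ht => Real.exp_le_exp.2 ?_
        have := mul_le_mul_of_nonneg_left (Real.cos_le_one_sub_mul_cos_sq (abs_le.2 ht)) hV.le
        linear_combination this
    _ ≤ ∫ t, Real.exp (-(2 * V / π ^ 2) * t ^ 2) := by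
        rw [intervalIntegral.integral_of_le (by linarith [pi_pos])]
        exact setIntegral_le_integral (integrable_exp_neg_mul_sq hb)
          (.of_forall fun t => (Real.exp_pos _).le)
    _ = π * √(π / 2) / √V := by
        rw [integral_gaussian, div_div_eq_mul_div, ← Real.sqrt_sq pi_pos.le, ← Real.sqrt_mul,
          ← Real.sqrt_div]
        · congr 1; field_simp
          exact Real.sq_sqrt (sq_nonneg π)
        all_goals positivity
    _ ≤ 2 * π / √V := by
        rw [mul_comm 2 π]
        gcongr
        rw [Real.sqrt_le_iff]
        constructor <;> nlinarith [pi_le_four]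

theorem measureReal_singleton_le_one_div_sqrt {μ : Measure ℝ} [IsFiniteMeasure μ]
    (hμ : ∀ᵐ x ∂μ, x ∈ Set.range ((↑) : ℤ → ℝ)) {V : ℝ} (hV : 0 < V)
    (hφ : ∀ t, ‖charFun μ t‖ ≤ Real.exp (-V * (1 - Real.cos t))) (k : ℤ) :
    μ.real {(k : ℝ)} ≤ 1 / √V := by
  have hinv := integral_charFun_mul_exp_eq_two_pi_mul_measureReal hμ k
  refine le_of_mul_le_mul_left ?_ two_pi_pos
  calc 2 * π * μ.real {(k : ℝ)}
      = ‖∫ t in (-π)..π, charFun μ t * Complex.exp (-(k * t * I))‖ := by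
        rw [hinv]; norm_cast
        rw [Real.norm_of_nonneg (by positivity)]
    _ ≤ ∫ t in (-π)..π, Real.exp (-V * (1 - Real.cos t)) := by
        refine intervalIntegral.norm_integral_le_of_norm_le (by linarith [pi_pos])
          (.of_forall fun t _ => ?_) (Continuous.intervalIntegrable (by fun_prop) _ _)
        rw [norm_mul, ← neg_mul, ← ofReal_intCast, ← ofReal_mul, ← ofReal_neg,
          norm_exp_ofReal_mul_I, mul_one]
        exact hφ t
    _ ≤ 2 * π / √V := integral_exp_neg_mul_one_sub_cos_le hV
    _ = 2 * π * (1 / √V) := by ring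

theorem Complex.norm_one_add_mul_exp_mul_I_sub_one_le (p t : ℝ) :
    ‖1 + p * (Complex.exp (t * I) - 1)‖ ≤ Real.exp (-(p * (1 - p)) * (1 - Real.cos t)) := by
  have hnormSq : normSq (1 + p * (Complex.exp (t * I) - 1))
      = 1 - 2 * (p * (1 - p)) * (1 - Real.cos t) := by
    have hreim : 1 + p * (Complex.exp (t * I) - 1)
        = ((1 + p * (Real.cos t - 1) : ℝ) : ℂ) + (p * Real.sin t : ℝ) * I := by
      rw [Complex.exp_mul_I, ← ofReal_cos, ← ofReal_sin]
      push_cast; ring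
    rw [hreim, normSq_add_mul_I]
    linear_combination p ^ 2 * Real.sin_sq_add_cos_sq t
  rw [← Real.sqrt_sq (Real.exp_pos _).le, ← Real.exp_nat_mul, Complex.norm_def, hnormSq]
  refine Real.sqrt_le_sqrt ?_
  push_cast
  linarith [Real.add_one_le_exp (2 * (-(p * (1 - p)) * (1 - Real.cos t)))]

theorem charFun_eq_of_ae_eq_zero_or_eq_one {μ : Measure ℝ} [IsProbabilityMeasure μ]
    (hμ : ∀ᵐ x ∂μ, x = 0 ∨ x = 1) (t : ℝ) :
    charFun μ t = 1 + (∫ x, x ∂μ) * (Complex.exp (t * I) - 1) := by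
  have hid : Integrable (fun x : ℝ => x) μ :=
    .of_bound (by fun_prop) 1 (hμ.mono fun x hx => by rcases hx with rfl | rfl <;> simp)
  calc charFun μ t = ∫ x, (1 + (x : ℂ) * (Complex.exp (t * I) - 1)) ∂μ := by
        rw [charFun_apply_real]
        refine integral_congr_ae (hμ.mono fun x hx => ?_)
        rcases hx with rfl | rfl <;> simp
    _ = 1 + (∫ x, x ∂μ) * (Complex.exp (t * I) - 1) := by
        rw [integral_add (integrable_const _) (hid.ofReal.mul_const _), integral_const,
          integral_mul_const, integral_complex_ofReal]
        simp

theorem norm_charFun_map_sum_le_exp {Ω ι : Type*} [Fintype ι] {mΩ : MeasurableSpace Ω}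
    {P : Measure Ω} {ξ : ι → Ω → ℝ} (hξ : ∀ i, Measurable (ξ i))
    (h01 : ∀ i ω, ξ i ω = 0 ∨ ξ i ω = 1) (hind : iIndepFun ξ P) (t : ℝ) :
    ‖charFun (P.map fun ω => ∑ i, ξ i ω) t‖
      ≤ Real.exp (-(∑ i, (∫ ω, ξ i ω ∂P) * (1 - ∫ ω, ξ i ω ∂P)) * (1 - Real.cos t)) := by
  have := hind.isProbabilityMeasure
  have hbern (i : ι) : ∀ᵐ x ∂P.map (ξ i), x = 0 ∨ x = 1 :=
    (ae_map_iff (hξ i).aemeasurable (by measurability)).2 (.of_forall (h01 i))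
  rw [hind.charFun_map_fun_sum_eq_prod fun i => (hξ i).aemeasurable, Finset.prod_apply,
    norm_prod, neg_mul, Finset.sum_mul, ← Finset.sum_neg_distrib, Real.exp_sum]
  refine Finset.prod_le_prod (fun i _ => norm_nonneg _) fun i _ => ?_
  have := Measure.isProbabilityMeasure_map (μ := P) (hξ i).aemeasurable
  rw [charFun_eq_of_ae_eq_zero_or_eq_one (hbern i),
    integral_map (f := fun x : ℝ => x) (hξ i).aemeasurable aestronglyMeasurable_id, ← neg_mul]
  exact Complex.norm_one_add_mul_exp_mul_I_sub_one_le _ t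

theorem bernoulli_sum_anticoncentration :
    ∃ C : ℝ, 0 < C ∧
      ∀ (Ω : Type) [MeasureSpace Ω], IsProbabilityMeasure (ℙ : Measure Ω) →
      ∀ (n : ℕ) (ξ : Fin n → Ω → ℝ) (lam : Fin n → ℝ),
      (∀ i, Measurable (ξ i)) →
      (∀ i ω, ξ i ω = 0 ∨ ξ i ω = 1) →
      (∀ i, (∫ ω, ξ i ω) = lam i) →
      (∀ i, lam i ∈ Set.Icc (0:ℝ) 1) →
      iIndepFun ξ ℙ →
      0 < ∑ i, lam i * (1 - lam i) →
      ∀ k : ℤ, (ℙ {ω | ∑ i, ξ i ω = (k:ℝ)}).toReal ≤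
        C / Real.sqrt (∑ i, lam i * (1 - lam i)) := by
  refine ⟨1, one_pos, fun Ω _ _ n ξ lam hξ h01 hmean _ hind hV k => ?_⟩
  have hS : Measurable fun ω => ∑ i, ξ i ω := Finset.measurable_sum _ fun i _ => hξ i
  have hZ : ∀ᵐ x ∂(ℙ : Measure Ω).map (fun ω => ∑ i, ξ i ω), x ∈ Set.range ((↑) : ℤ → ℝ) := by
    refine (ae_map_iff hS.aemeasurable (Set.countable_range _).measurableSet).2
      (.of_forall fun ω => ⟨∑ i, if ξ i ω = 1 then 1 else 0, ?_⟩)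
    push_cast
    exact Finset.sum_congr rfl fun i _ => by rcases h01 i ω with h | h <;> simp [h]
  have hφ (t : ℝ) := norm_charFun_map_sum_le_exp hξ h01 hind t
  simp only [hmean] at hφ
  have := measureReal_singleton_le_one_div_sqrt hZ hV hφ k
  rwa [map_measureReal_apply hS (measurableSet_singleton _)] at this
end

section
/- Let $P$ be a self-adjoint operator on a Hilbert space $H$ with $0 \leq P \leq 1$ and $P$ trace class, and let $Q$ be an orthogonal projection on $H$. Then $\mathrm{tr}(QPQ(1-P)) = \mathrm{tr}(PQ(1-P)) + \mathrm{tr}\left((QP(1-Q))(QP(1-Q))^*\right)$, and consequently $\mathrm{tr}(QP(1-P)) \leq \mathrm{tr}(QPQ(1-P))$. -/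
/-!
Write `P = R ∘L R` with `R` self-adjoint; as `‖R bᵢ‖² = ⟪P bᵢ, bᵢ⟫`, `R` is Hilbert–Schmidt.
For Hilbert–Schmidt `X` and `Y` the double series `∑ᵢⱼ ⟪Y bᵢ, bⱼ⟫ ⟪X bⱼ, bᵢ⟫` converges
absolutely, and summing it in either order gives `tr (X Y) = tr (Y X)`. Hence every trace
`tr (A P B)` equals `∑ᵢ ⟪B A (R bᵢ), R bᵢ⟫`, and in this form the identity holds term by term,
because `Q P - P Q` is antisymmetric and so has vanishing quadratic form. The inequality follows
from `tr (G G*) ≥ 0` and `tr (Q P (1 - P)) = tr (P Q (1 - P))`.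

The square root of `1 - y` for a self-adjoint `‖y‖ ≤ 1` is `1 - lim uₙ(y)` for Riesz's iteration
`u₀ = 0`, `uₙ₊₁ = (X + uₙ²) / 2`: the polynomials `uₙ` and `uₙ₊₁ - uₙ` have nonnegative
coefficients and `uₙ(1) ≤ 1`, so the increments of `uₙ(y)` have summable norms.
-/

open ContinuousLinearMap
open scoped RealInnerProductSpace

namespace Polynomial

def nonnegCoeffs : Subsemiring ℝ[X] where
  carrier := {p | ∀ k, 0 ≤ p.coeff k}
  zero_mem' k := by simp
  one_mem' k := by rw [coeff_one]; split_ifs <;> norm_num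
  add_mem' hp hq k := by rw [coeff_add]; exact add_nonneg (hp k) (hq k)
  mul_mem' hp hq k := by
    rw [coeff_mul]; exact Finset.sum_nonneg fun _ _ => mul_nonneg (hp _) (hq _)

theorem C_mem_nonnegCoeffs {c : ℝ} (hc : 0 ≤ c) : C c ∈ nonnegCoeffs := fun k => by
  rw [coeff_C]; split_ifs <;> simp [hc]

theorem X_mem_nonnegCoeffs : X ∈ nonnegCoeffs := fun k => by
  rw [coeff_X]; split_ifs <;> simp

theorem norm_aeval_le_eval_one {A : Type*} [NormedRing A] [NormedAlgebra ℝ A] [NormOneClass A]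
    {y : A} (hy : ‖y‖ ≤ 1) {p : ℝ[X]} (hp : p ∈ nonnegCoeffs) : ‖aeval y p‖ ≤ p.eval 1 := by
  rw [aeval_eq_sum_range, eval_eq_sum_range]
  refine (norm_sum_le _ _).trans (Finset.sum_le_sum fun k _ => ?_)
  rw [norm_smul, Real.norm_of_nonneg (hp k), one_pow, mul_one]
  exact mul_le_of_le_one_right (hp k) ((norm_pow_le y k).trans (pow_le_one₀ (norm_nonneg y) hy))

theorem eval_one_nonneg {p : ℝ[X]} (hp : p ∈ nonnegCoeffs) : 0 ≤ p.eval 1 := by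
  rw [eval_eq_sum_range]; exact Finset.sum_nonneg fun k _ => by simpa using hp k

noncomputable def sqrtIter : ℕ → ℝ[X]
  | 0 => 0
  | n + 1 => C (1 / 2) * (X + sqrtIter n ^ 2)

theorem sqrtIter_mem_nonnegCoeffs (n : ℕ) : sqrtIter n ∈ nonnegCoeffs := by
  induction n with
  | zero => exact zero_mem _
  | succ n ih =>
    exact mul_mem (C_mem_nonnegCoeffs (by norm_num)) (add_mem X_mem_nonnegCoeffs (pow_mem ih 2))

theorem sqrtIter_succ_sub_mem_nonnegCoeffs (n : ℕ) :
    sqrtIter (n + 1) - sqrtIter n ∈ nonnegCoeffs := by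
  induction n with
  | zero => simpa [sqrtIter] using mul_mem (C_mem_nonnegCoeffs (by norm_num)) X_mem_nonnegCoeffs
  | succ n ih =>
    have h : sqrtIter (n + 2) - sqrtIter (n + 1) =
        C (1 / 2) * ((sqrtIter (n + 1) - sqrtIter n) * (sqrtIter (n + 1) + sqrtIter n)) := by
      simp only [sqrtIter]; ring
    rw [h]
    exact mul_mem (C_mem_nonnegCoeffs (by norm_num))
      (mul_mem ih (add_mem (sqrtIter_mem_nonnegCoeffs _) (sqrtIter_mem_nonnegCoeffs _)))

theorem eval_one_sqrtIter_le_one (n : ℕ) : (sqrtIter n).eval 1 ≤ 1 := by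
  induction n with
  | zero => simp [sqrtIter]
  | succ n ih =>
    have h0 := eval_one_nonneg (sqrtIter_mem_nonnegCoeffs n)
    simp only [sqrtIter, eval_mul, eval_C, eval_add, eval_X, eval_pow]
    nlinarith

end Polynomial

open Filter Polynomial in
theorem exists_isSelfAdjoint_mul_self_eq_one_sub {A : Type*} [NormedRing A] [NormedAlgebra ℝ A]
    [NormOneClass A] [CompleteSpace A] [StarRing A] [StarModule ℝ A] [ContinuousStar A]
    {y : A} (hy : IsSelfAdjoint y) (hy1 : ‖y‖ ≤ 1) : ∃ r, IsSelfAdjoint r ∧ r * r = 1 - y := by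
  set V : ℕ → A := fun n => aeval y (sqrtIter n)
  have hV_succ (n : ℕ) : V (n + 1) = (1 / 2 : ℝ) • (y + V n * V n) := by
    simp only [V, sqrtIter, map_mul, map_add, aeval_C, aeval_X, Algebra.smul_def, sq]
  have hV_sa (n : ℕ) : IsSelfAdjoint (V n) := by
    induction n with
    | zero => simp [V, sqrtIter]
    | succ n ih => rw [hV_succ]; exact .smul (.all _) (hy.add (by simpa only [sq] using ih.pow 2))
  have hcauchy : CauchySeq V := by
    refine cauchySeq_of_dist_le_of_summable (fun n => (sqrtIter (n + 1) - sqrtIter n).eval 1)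
      (fun n => ?_) (summable_of_sum_range_le (c := 1)
        (fun n => eval_one_nonneg (sqrtIter_succ_sub_mem_nonnegCoeffs n)) fun n => ?_)
    · rw [dist_comm, dist_eq_norm, ← map_sub]
      exact norm_aeval_le_eval_one hy1 (sqrtIter_succ_sub_mem_nonnegCoeffs n)
    · simp only [eval_sub]
      rw [Finset.sum_range_sub (fun n => (sqrtIter n).eval 1)]
      simpa [sqrtIter] using eval_one_sqrtIter_le_one n
  obtain ⟨u, hu⟩ := cauchySeq_tendsto_of_complete hcauchy
  have hu_fix : u = (1 / 2 : ℝ) • (y + u * u) := by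
    refine tendsto_nhds_unique (hu.comp (tendsto_add_atTop_nat 1)) ?_
    simp only [Function.comp_def, hV_succ]
    exact ((hu.mul hu).const_add y).const_smul _
  have hu_sa : IsSelfAdjoint u :=
    (isClosed_eq continuous_star continuous_id).mem_of_tendsto hu (Eventually.of_forall hV_sa)
  refine ⟨1 - u, .sub (.one _) hu_sa, ?_⟩
  have h2u : u + u = y + u * u := by
    conv_lhs => rw [hu_fix]
    rw [← two_smul ℝ, smul_smul]; norm_num
  calc (1 - u) * (1 - u) = 1 - (u + u) + u * u := by noncomm_ring
    _ = 1 - y := by rw [h2u]; abel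

section

variable {H : Type*} [NormedAddCommGroup H] [InnerProductSpace ℝ H]

theorem summable_inner_apply_self {ι : Type*} {v : ι → H} (hv : Summable fun i => ‖v i‖ ^ 2)
    (M : H →L[ℝ] H) : Summable fun i => ⟪M (v i), v i⟫ := by
  refine (hv.mul_left ‖M‖).of_norm_bounded fun i => ?_
  rw [Real.norm_eq_abs, sq, ← mul_assoc]
  exact (abs_real_inner_le_norm _ _).trans
    (mul_le_mul_of_nonneg_right (le_opNorm M (v i)) (norm_nonneg _))

namespace HilbertBasis

variable {ι : Type*} (b : HilbertBasis ι ℝ H)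

theorem hasSum_inner_sq (x : H) : HasSum (fun i => ⟪x, b i⟫ ^ 2) (‖x‖ ^ 2) := by
  have h := b.hasSum_inner_mul_inner x x
  rw [real_inner_self_eq_norm_sq] at h
  simpa only [sq, real_inner_comm x] using h

def IsHilbertSchmidt (X : H →L[ℝ] H) : Prop := Summable fun i => ‖X (b i)‖ ^ 2

variable {b}

theorem IsHilbertSchmidt.summable_sq_inner {X : H →L[ℝ] H} (hX : b.IsHilbertSchmidt X) :
    Summable fun p : ι × ι => ⟪X (b p.1), b p.2⟫ ^ 2 := by
  refine (summable_prod_of_nonneg fun p => sq_nonneg (⟪X (b p.1), b p.2⟫)).mpr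
    ⟨fun i => (b.hasSum_inner_sq (X (b i))).summable,
      Summable.congr hX fun i => (b.hasSum_inner_sq (X (b i))).tsum_eq.symm⟩

theorem IsHilbertSchmidt.comp_left {X : H →L[ℝ] H} (hX : b.IsHilbertSchmidt X) (C : H →L[ℝ] H) :
    b.IsHilbertSchmidt (C ∘L X) :=
  (Summable.mul_left (‖C‖ ^ 2) hX).of_nonneg_of_le (fun _ => sq_nonneg _) fun i => by
    rw [← mul_pow]
    exact pow_le_pow_left₀ (norm_nonneg _) (le_opNorm C _) 2

end HilbertBasis

variable [CompleteSpace H]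

theorem IsSelfAdjoint.inner_comp_apply_self_comm {S T : H →L[ℝ] H}
    (hS : IsSelfAdjoint S) (hT : IsSelfAdjoint T) (x : H) :
    ⟪(S ∘L T) x, x⟫ = ⟪(T ∘L S) x, x⟫ :=
  calc ⟪S (T x), x⟫ = ⟪T x, S x⟫ := hS.isSymmetric _ _
    _ = ⟪S x, T x⟫ := real_inner_comm _ _
    _ = ⟪T (S x), x⟫ := (hT.isSymmetric _ _).symm

theorem ContinuousLinearMap.IsPositive.exists_isSelfAdjoint_mul_self_eq {T : H →L[ℝ] H}
    (hT : T.IsPositive) : ∃ R, IsSelfAdjoint R ∧ R * R = T := by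
  rcases subsingleton_or_nontrivial H with hH | hH
  · exact ⟨0, .zero _, Subsingleton.elim _ _⟩
  set c := ‖T‖ + 1
  have hc : 0 < c := by positivity
  have hYsa : IsSelfAdjoint (1 - c⁻¹ • T) := .sub (.one _) (.smul (.all _) hT.isSelfAdjoint)
  have hY : ‖1 - c⁻¹ • T‖ ≤ 1 := by
    rw [norm_eq_iSup_rayleighQuotient _ hYsa.isSymmetric]
    refine ciSup_le fun x => ?_
    have hTx : ⟪T x, x⟫ ≤ c * ‖x‖ ^ 2 := by
      nlinarith [real_inner_le_norm (T x) x, le_opNorm T x, norm_nonneg x, sq_nonneg ‖x‖]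
    have hinner : reApplyInnerSelf (1 - c⁻¹ • T) x = ‖x‖ ^ 2 - c⁻¹ * ⟪T x, x⟫ := by
      simp [reApplyInnerSelf_apply, inner_sub_left, inner_smul_left]
    rw [rayleighQuotient, hinner, abs_div, abs_sq]
    refine div_le_one_of_le₀ (abs_le.mpr ⟨?_, ?_⟩) (sq_nonneg _)
    · have := (inv_mul_le_iff₀ hc).mpr hTx; nlinarith [hT.inner_nonneg_left x]
    · nlinarith [mul_nonneg (inv_nonneg.mpr hc.le) (hT.inner_nonneg_left x)]
  obtain ⟨r, hr, hrr⟩ := exists_isSelfAdjoint_mul_self_eq_one_sub hYsa hY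
  refine ⟨√c • r, .smul (.all _) hr, ?_⟩
  rw [smul_mul_smul, hrr, sub_sub_cancel, smul_smul, Real.mul_self_sqrt hc.le,
    mul_inv_cancel₀ hc.ne', one_smul]

namespace HilbertBasis

variable {ι : Type*} {b : HilbertBasis ι ℝ H}

theorem IsHilbertSchmidt.adjoint {X : H →L[ℝ] H} (hX : b.IsHilbertSchmidt X) :
    b.IsHilbertSchmidt (adjoint X) := by
  refine hX.summable_sq_inner.prod_symm.prod.congr fun j => ?_
  rw [← (b.hasSum_inner_sq _).tsum_eq]
  exact tsum_congr fun i => by rw [adjoint_inner_left, real_inner_comm]; rfl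

theorem IsHilbertSchmidt.comp_right {X : H →L[ℝ] H} (hX : b.IsHilbertSchmidt X) (D : H →L[ℝ] H) :
    b.IsHilbertSchmidt (X ∘L D) := by
  simpa only [adjoint_comp, adjoint_adjoint] using
    ((hX.adjoint.comp_left (ContinuousLinearMap.adjoint D)).adjoint)

theorem IsHilbertSchmidt.hasSum_inner_mul_inner {X Y : H →L[ℝ] H} (hX : b.IsHilbertSchmidt X)
    (hY : b.IsHilbertSchmidt Y) :
    HasSum (fun p : ι × ι => ⟪Y (b p.1), b p.2⟫ * ⟪X (b p.2), b p.1⟫)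
      (∑' i, ⟪(X ∘L Y) (b i), b i⟫) := by
  have hrow (i : ι) : HasSum (fun j => ⟪Y (b i), b j⟫ * ⟪X (b j), b i⟫)
      ⟪(X ∘L Y) (b i), b i⟫ := by
    simpa only [adjoint_inner_right, comp_apply] using
      b.hasSum_inner_mul_inner (Y (b i)) (ContinuousLinearMap.adjoint X (b i))
  have hsum : Summable fun p : ι × ι => ⟪Y (b p.1), b p.2⟫ * ⟪X (b p.2), b p.1⟫ := by
    refine ((hY.summable_sq_inner.add hX.adjoint.summable_sq_inner).div_const 2).of_norm_bounded
      fun p => ?_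
    have h : ⟪X (b p.2), b p.1⟫ = ⟪ContinuousLinearMap.adjoint X (b p.1), b p.2⟫ := by
      rw [adjoint_inner_left, real_inner_comm]
    rw [h, norm_mul, Real.norm_eq_abs, Real.norm_eq_abs]
    generalize ⟪Y (b p.1), b p.2⟫ = s
    generalize ⟪ContinuousLinearMap.adjoint X (b p.1), b p.2⟫ = t
    nlinarith [two_mul_le_add_sq |s| |t|, sq_abs s, sq_abs t]
  convert hsum.hasSum using 1
  exact (hsum.hasSum.prod_fiberwise hrow).tsum_eq

theorem IsHilbertSchmidt.tsum_inner_comp_comm {X Y : H →L[ℝ] H} (hX : b.IsHilbertSchmidt X)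
    (hY : b.IsHilbertSchmidt Y) :
    ∑' i, ⟪(X ∘L Y) (b i), b i⟫ = ∑' i, ⟪(Y ∘L X) (b i), b i⟫ := by
  rw [← (hX.hasSum_inner_mul_inner hY).tsum_eq, ← (hY.hasSum_inner_mul_inner hX).tsum_eq,
    ← (Equiv.prodComm ι ι).tsum_eq]
  exact tsum_congr fun p => mul_comm _ _

theorem IsHilbertSchmidt.tsum_inner_comp_comp_eq {R P : H →L[ℝ] H} (hR : b.IsHilbertSchmidt R)
    (hRsa : IsSelfAdjoint R) (hRP : R ∘L R = P) (A B : H →L[ℝ] H) :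
    ∑' i, ⟪(A ∘L P ∘L B) (b i), b i⟫ = ∑' i, ⟪(B ∘L A) (R (b i)), R (b i)⟫ := by
  rw [← hRP, show A ∘L (R ∘L R) ∘L B = (A ∘L R) ∘L (R ∘L B) from rfl,
    (hR.comp_left A).tsum_inner_comp_comm (hR.comp_right B)]
  exact tsum_congr fun i => hRsa.isSymmetric _ _

theorem exists_isHilbertSchmidt_mul_self_eq (b : HilbertBasis ι ℝ H) {P : H →L[ℝ] H}
    (hP : P.IsPositive) (htr : Summable fun i => ⟪P (b i), b i⟫) :
    ∃ R, IsSelfAdjoint R ∧ b.IsHilbertSchmidt R ∧ R ∘L R = P := by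
  obtain ⟨R, hRsa, hRP⟩ := hP.exists_isSelfAdjoint_mul_self_eq
  refine ⟨R, hRsa, Summable.congr htr fun i => ?_, hRP⟩
  rw [← hRP]
  exact (hRsa.isSymmetric _ _).trans (real_inner_self_eq_norm_sq _)

end HilbertBasis

end

theorem trace_identity_projection_general
    {H : Type*} [NormedAddCommGroup H] [InnerProductSpace ℝ H] [CompleteSpace H]
    {ι : Type*} (b : HilbertBasis ι ℝ H)
    (P Q : H →L[ℝ] H)
    (hPsa : IsSelfAdjoint P)
    (hPpos : ∀ x, 0 ≤ ⟪P x, x⟫)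
    (hPtraceClass : Summable fun i => ⟪P (b i), b i⟫)
    (hQsa : IsSelfAdjoint Q) (hQproj : Q ∘L Q = Q) :
    (∑' i, ⟪(Q ∘L P ∘L Q ∘L (1 - P)) (b i), b i⟫)
        = (∑' i, ⟪(P ∘L Q ∘L (1 - P)) (b i), b i⟫)
          + ∑' i, ⟪((Q ∘L P ∘L (1 - Q)) ∘L
              (ContinuousLinearMap.adjoint (Q ∘L P ∘L (1 - Q)))) (b i), b i⟫ ∧
      (∑' i, ⟪(Q ∘L P ∘L (1 - P)) (b i), b i⟫)
        ≤ ∑' i, ⟪(Q ∘L P ∘L Q ∘L (1 - P)) (b i), b i⟫ := by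
  obtain ⟨R, hRsa, hR, hRP⟩ :=
    b.exists_isHilbertSchmidt_mul_self_eq ((isPositive_iff' P).mpr ⟨hPsa, hPpos⟩) hPtraceClass
  have hrot := hR.tsum_inner_comp_comp_eq hRsa hRP
  have hrot₁ (B : H →L[ℝ] H) :
      ∑' i, ⟪(P ∘L B) (b i), b i⟫ = ∑' i, ⟪B (R (b i)), R (b i)⟫ := hrot 1 B
  have hQQ (x : H) : Q (Q x) = Q x := congr($hQproj x)
  have hG : adjoint (Q ∘L P ∘L (1 - Q)) = (1 - Q) ∘L P ∘L Q := by
    rw [adjoint_comp, adjoint_comp, hPsa.adjoint_eq, hQsa.adjoint_eq,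
      ((IsSelfAdjoint.one _).sub hQsa).adjoint_eq, comp_assoc]
  have hop : (Q ∘L (1 - P)) ∘L Q + P ∘L Q
      = Q ∘L (1 - P) + ((1 - Q) ∘L (1 - Q) ∘L P ∘L Q) ∘L Q + Q ∘L P := by
    ext x
    simp only [comp_sub, sub_comp, add_apply, sub_apply, comp_apply, one_apply_eq_self, hQQ,
      sub_self, sub_zero]
    abel
  have key : ∑' i, ⟪(Q ∘L P ∘L Q ∘L (1 - P)) (b i), b i⟫
      = ∑' i, ⟪(P ∘L Q ∘L (1 - P)) (b i), b i⟫
        + ∑' i, ⟪((Q ∘L P ∘L (1 - Q)) ∘L adjoint (Q ∘L P ∘L (1 - Q))) (b i), b i⟫ := by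
    rw [hrot, hrot₁, hG,
      show (Q ∘L P ∘L (1 - Q)) ∘L (1 - Q) ∘L P ∘L Q
        = Q ∘L P ∘L (1 - Q) ∘L (1 - Q) ∘L P ∘L Q from rfl, hrot,
      ← (summable_inner_apply_self hR _).tsum_add (summable_inner_apply_self hR _)]
    refine tsum_congr fun i => ?_
    have h := congr(⟪$hop (R (b i)), R (b i)⟫)
    -- the quadratic forms of `Q ∘L P` and `P ∘L Q` cancel
    simp only [add_apply, inner_add_left, hQsa.inner_comp_apply_self_comm hPsa] at h
    linarith
  have hPQ : ∑' i, ⟪(Q ∘L P ∘L (1 - P)) (b i), b i⟫ = ∑' i, ⟪(P ∘L Q ∘L (1 - P)) (b i), b i⟫ := by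
    rw [hrot, hrot₁]
    exact tsum_congr fun i => ((IsSelfAdjoint.one _).sub hPsa).inner_comp_apply_self_comm hQsa _
  refine ⟨key, hPQ.trans_le ((le_add_of_nonneg_right ?_).trans_eq key.symm)⟩
  exact tsum_nonneg fun i => (isPositive_self_comp_adjoint _).inner_nonneg_left (b i)

theorem trace_identity_projection
    {H : Type*} [NormedAddCommGroup H] [InnerProductSpace ℝ H] [CompleteSpace H]
    {ι : Type*} (b : HilbertBasis ι ℝ H)
    (P Q : H →L[ℝ] H)
    (hPsa : IsSelfAdjoint P)
    (hPpos : ∀ x, 0 ≤ ⟪P x, x⟫)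
    (hPcontr : ∀ x, ⟪P x, x⟫ ≤ ⟪x, x⟫)
    (hPtraceClass : Summable fun i => ⟪P (b i), b i⟫)
    (hQsa : IsSelfAdjoint Q) (hQproj : Q ∘L Q = Q) :
    (∑' i, ⟪(Q ∘L P ∘L Q ∘L (1 - P)) (b i), b i⟫)
        = (∑' i, ⟪(P ∘L Q ∘L (1 - P)) (b i), b i⟫)
          + ∑' i, ⟪((Q ∘L P ∘L (1 - Q)) ∘L
              (ContinuousLinearMap.adjoint (Q ∘L P ∘L (1 - Q)))) (b i), b i⟫ ∧
      (∑' i, ⟪(Q ∘L P ∘L (1 - P)) (b i), b i⟫)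
        ≤ ∑' i, ⟪(Q ∘L P ∘L Q ∘L (1 - P)) (b i), b i⟫ :=
  trace_identity_projection_general b P Q hPsa hPpos hPtraceClass hQsa hQproj
end

section
/- Let $b_0 = 0$ and for $1 \leq l \leq m$ let $b_l = \sum_{k=1}^{l} a_k$, where $a_1,\dots,a_m$ are complex numbers whose sum over each interval $I$ of a partition of $\{1,\dots,m\}$ into intervals of length at most $L$ vanishes. Then $\sum_{l=0}^m |b_l|^2 \leq L^2 \sum_{l=1}^m |a_l|^2$. -/
/-!
Every block endpoint `t k` is a zero of the partial sums `b`, so on the block `(t k, t (k+1)]`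
the partial sum `b l` only involves the `a j` of that block. Cauchy–Schwarz then bounds each
of the at most `L` terms `‖b l‖²` of the block by `L` times the block's `∑ ‖a j‖²`, and
summing over the blocks gives the factor `L²`.
-/

open Finset

theorem sum_range_sum_Ioc_eq_sum_Ioc {M : Type*} [AddCommMonoid M] (f : ℕ → M) {t : ℕ → ℕ}
    {K : ℕ} (ht : MonotoneOn t (Set.Iic K)) :
    ∑ k ∈ range K, ∑ l ∈ Ioc (t k) (t (k + 1)), f l = ∑ l ∈ Ioc (t 0) (t K), f l := by
  induction K with
  | zero => simp
  | succ K ih =>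
    have hK : K ∈ Set.Iic (K + 1) := Set.mem_Iic.2 K.le_succ
    rw [sum_range_succ, ih (ht.mono (Set.Iic_subset_Iic.2 K.le_succ)),
      sum_Ioc_consecutive _ (ht (by simp) hK K.zero_le) (ht hK (by simp) K.le_succ)]

theorem norm_sum_sq_le_card_mul_sum_norm_sq {ι E : Type*} [SeminormedAddCommGroup E]
    (s : Finset ι) (f : ι → E) : ‖∑ i ∈ s, f i‖ ^ 2 ≤ #s * ∑ i ∈ s, ‖f i‖ ^ 2 :=
  (pow_le_pow_left₀ (norm_nonneg _) (norm_sum_le _ _) 2).trans sq_sum_le_card_mul_sum_sq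

theorem sum_norm_sum_Ioc_sq_le {E : Type*} [SeminormedAddCommGroup E] (f : ℕ → E) (s e : ℕ) :
    ∑ l ∈ Ioc s e, ‖∑ j ∈ Ioc s l, f j‖ ^ 2 ≤ ((e - s : ℕ) : ℝ) ^ 2 * ∑ j ∈ Ioc s e, ‖f j‖ ^ 2 := by
  calc ∑ l ∈ Ioc s e, ‖∑ j ∈ Ioc s l, f j‖ ^ 2
      ≤ ∑ _l ∈ Ioc s e, ((e - s : ℕ) : ℝ) * ∑ j ∈ Ioc s e, ‖f j‖ ^ 2 := by
        refine sum_le_sum fun l hl => (norm_sum_sq_le_card_mul_sum_norm_sq _ _).trans ?_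
        have hle : l ≤ e := (mem_Ioc.1 hl).2
        rw [Nat.card_Ioc]
        gcongr
    _ = ((e - s : ℕ) : ℝ) ^ 2 * ∑ j ∈ Ioc s e, ‖f j‖ ^ 2 := by
        rw [sum_const, Nat.card_Ioc, nsmul_eq_mul]
        ring

theorem partial_sums_sq_bound (m K : ℕ) (L : ℝ) (a : ℕ → ℂ) (t : ℕ → ℕ)
    (h0 : t 0 = 0) (hK : t K = m)
    (hmono : ∀ k < K, t k < t (k + 1))
    (hlen : ∀ k < K, ((t (k + 1) : ℝ) - t k) ≤ L)
    (hzero : ∀ k < K, ∑ l ∈ Finset.Ioc (t k) (t (k + 1)), a l = 0) :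
    ∑ l ∈ Finset.range (m + 1), ‖∑ j ∈ Finset.Icc 1 l, a j‖^2 ≤
      L^2 * ∑ l ∈ Finset.Icc 1 m, ‖a l‖^2 := by
  have ht : MonotoneOn t (Set.Iic K) := monotoneOn_of_le_add_one Set.ordConnected_Iic
    fun k _ _ hk => (hmono k (Set.mem_Iic.1 hk)).le
  have hb : ∀ k ≤ K, ∑ j ∈ Ioc 0 (t k), a j = 0 := fun k hk => by
    rw [← h0, ← sum_range_sum_Ioc_eq_sum_Ioc a (ht.mono (Set.Iic_subset_Iic.2 hk))]
    exact sum_eq_zero fun i hi => hzero i ((mem_range.1 hi).trans_le hk)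
  have hblock : ∀ k < K, ∀ l ∈ Ioc (t k) (t (k + 1)),
      ∑ j ∈ Ioc 0 l, a j = ∑ j ∈ Ioc (t k) l, a j := fun k hk l hl => by
    rw [← sum_Ioc_consecutive _ (t k).zero_le (mem_Ioc.1 hl).1.le, hb k hk.le, zero_add]
  have hIcc : ∀ n, Icc 1 n = Ioc 0 n := Icc_add_one_left_eq_Ioc 0
  simp_rw [hIcc]
  rw [Nat.range_succ_eq_Icc_zero, Icc_eq_cons_Ioc m.zero_le, sum_cons, Ioc_self, sum_empty,
    norm_zero, sq, zero_mul, zero_add, show Ioc 0 m = Ioc (t 0) (t K) by rw [h0, hK], ← sum_range_sum_Ioc_eq_sum_Ioc _ ht,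
    ← sum_range_sum_Ioc_eq_sum_Ioc _ ht, mul_sum]
  refine sum_le_sum fun k hk => ?_
  have hk : k < K := mem_range.1 hk
  calc ∑ l ∈ Ioc (t k) (t (k + 1)), ‖∑ j ∈ Ioc 0 l, a j‖ ^ 2
      = ∑ l ∈ Ioc (t k) (t (k + 1)), ‖∑ j ∈ Ioc (t k) l, a j‖ ^ 2 :=
        sum_congr rfl fun l hl => by rw [hblock k hk l hl]
    _ ≤ ((t (k + 1) - t k : ℕ) : ℝ) ^ 2 * ∑ j ∈ Ioc (t k) (t (k + 1)), ‖a j‖ ^ 2 :=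
        sum_norm_sum_Ioc_sq_le a _ _
    _ ≤ L ^ 2 * ∑ j ∈ Ioc (t k) (t (k + 1)), ‖a j‖ ^ 2 := by
        gcongr
        rw [Nat.cast_sub (hmono k hk).le]
        exact hlen k hk
end
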